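/- arXiv:2307.13304 — 3 statements merged into one kernel-verified Lean document; each statement's English description precedes it below -/
import Mathlib

section
/- Let H ∈ ℝ^{n×n} be a μ-incoherent positive semidefinite symmetric matrix and let H = (Ù + I)D(Ù + I)^T be its LDL decomposition, where Ù is strictly upper triangular and D is a nonnegative diagonal matrix. Then tr(D) ≤ (μ²/n)·tr(H^{1/2})². -/
open Matrix

/-- A symmetric matrix `H ∈ ℝ^{n×n}` is `μc`-incoherent if it has an
eigendecomposition `H = Q Λ Qᵀ` (`Q` orthogonal, `Λ` diagonal) with
`|Q i j| ≤ μc / √n` for all `i, j`. -/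
def IncoherentH {n : ℕ} (H : Matrix (Fin n) (Fin n) ℝ) (μc : ℝ) : Prop :=
  ∃ Q Λ : Matrix (Fin n) (Fin n) ℝ,
    Q * Qᵀ = 1 ∧ (∀ i j, i ≠ j → Λ i j = 0) ∧ H = Q * Λ * Qᵀ ∧
    ∀ i j, |Q i j| ≤ μc / Real.sqrt n

/-!
Factor `H = A Aᵀ` with `A = (Ù + I) D^{1/2}`; as `Ù` is strictly upper triangular,
`A k k = √(D k k)`, so `tr D = ∑ₖ (A k k)²`. Write `H = Q diag(λ) Qᵀ` and take any positive `s`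
with `λ ≤ s²`. With `R = Q diag(√s) Qᵀ`, Cauchy–Schwarz applied to `A = R · (R⁻¹ A)` gives
`(A k k)² ≤ (R²) k k · ((R⁻¹ A)ᵀ (R⁻¹ A)) k k`. Incoherence bounds `(R²) k k = ∑ₗ s l (Q k l)²`
by `(μ²/n) ∑ s`, while the second factors sum to `tr (R⁻² H) = ∑ λ / s ≤ ∑ s`.
Letting `s = √λ + ε` tend to `√λ` gives the claim, since `H^{1/2} = Q diag(√λ) Qᵀ`.
-/

namespace Matrix

section ConjDiagonal

variable {ι R : Type*} [Fintype ι] [DecidableEq ι] [CommRing R] (Q : Matrix ι ι R)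

def conjDiagonal (f : ι → R) : Matrix ι ι R := Q * diagonal f * Qᵀ

theorem conjDiagonal_mul_conjDiagonal (hQ : Qᵀ * Q = 1) (f g : ι → R) :
    conjDiagonal Q f * conjDiagonal Q g = conjDiagonal Q (f * g) := by
  simp only [conjDiagonal, Matrix.mul_assoc]
  rw [← Matrix.mul_assoc Qᵀ Q, hQ, Matrix.one_mul, ← Matrix.mul_assoc (diagonal f),
    diagonal_mul_diagonal]
  rfl

theorem conjDiagonal_one (hQ : Q * Qᵀ = 1) : conjDiagonal Q 1 = 1 := by
  rw [conjDiagonal, show diagonal (1 : ι → R) = 1 from diagonal_one, Matrix.mul_one, hQ]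

@[simp]
theorem transpose_conjDiagonal (f : ι → R) : (conjDiagonal Q f)ᵀ = conjDiagonal Q f := by
  simp [conjDiagonal, Matrix.mul_assoc]

theorem trace_conjDiagonal (hQ : Qᵀ * Q = 1) (f : ι → R) :
    trace (conjDiagonal Q f) = ∑ l, f l := by
  rw [conjDiagonal, trace_mul_cycle, hQ, Matrix.one_mul, trace_diagonal]

theorem conjDiagonal_apply_self (f : ι → R) (k : ι) :
    conjDiagonal Q f k k = ∑ l, f l * Q k l ^ 2 := by
  rw [conjDiagonal, mul_apply]
  simp only [mul_diagonal, transpose_apply]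
  exact Finset.sum_congr rfl fun l _ => by ring

end ConjDiagonal

section RealConjDiagonal

variable {ι : Type*} [Fintype ι] [DecidableEq ι] {Q : Matrix ι ι ℝ} {f : ι → ℝ}

theorem posSemidef_conjDiagonal (hf : 0 ≤ f) : (conjDiagonal Q f).PosSemidef := by
  simpa [conjDiagonal, conjTranspose_eq_transpose_of_trivial] using
    (posSemidef_diagonal_iff.mpr hf).mul_mul_conjTranspose_same Q

theorem nonneg_of_posSemidef_conjDiagonal (hQ : Qᵀ * Q = 1)
    (hf : (conjDiagonal Q f).PosSemidef) : 0 ≤ f := by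
  have hconj : Qᵀ * conjDiagonal Q f * Q = diagonal f := by
    simp only [conjDiagonal, Matrix.mul_assoc, hQ, Matrix.mul_one]
    rw [← Matrix.mul_assoc, hQ, Matrix.one_mul]
  refine posSemidef_diagonal_iff.mp ?_
  simpa [hconj, conjTranspose_eq_transpose_of_trivial] using hf.conjTranspose_mul_mul_same Q

theorem conjDiagonal_apply_self_le {c : ℝ} (hf : 0 ≤ f) (hQc : ∀ k l, Q k l ^ 2 ≤ c) (k : ι) :
    conjDiagonal Q f k k ≤ c * ∑ l, f l := by
  rw [conjDiagonal_apply_self, Finset.mul_sum]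
  exact Finset.sum_le_sum fun l _ => by
    rw [mul_comm c]; exact mul_le_mul_of_nonneg_left (hQc k l) (hf l)

end RealConjDiagonal

section CauchySchwarz

variable {ι κ m : Type*} [Fintype κ]

theorem sq_mul_apply_le (P : Matrix m κ ℝ) (B : Matrix κ ι ℝ) (i : m) (j : ι) :
    (P * B) i j ^ 2 ≤ (P * Pᵀ) i i * (Bᵀ * B) j j := by
  simpa only [mul_apply, transpose_apply, ← sq] using
    Finset.sum_mul_sq_le_sq_mul_sq Finset.univ (fun l => P i l) (fun l => B l j)

theorem sum_sq_diag_mul_le [Fintype ι] {c : ℝ} (P : Matrix ι κ ℝ) (B : Matrix κ ι ℝ)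
    (hP : ∀ k, (P * Pᵀ) k k ≤ c) : ∑ k, (P * B) k k ^ 2 ≤ c * trace (Bᵀ * B) := by
  rw [trace, Finset.mul_sum]
  exact Finset.sum_le_sum fun k _ => (sq_mul_apply_le P B k k).trans <|
    mul_le_mul_of_nonneg_right (hP k) (posSemidef_conjTranspose_mul_self B).diag_nonneg

end CauchySchwarz

section Incoherent

variable {ι : Type*} [Fintype ι] [DecidableEq ι] {Q : Matrix ι ι ℝ} {c : ℝ}

theorem sum_sq_diag_le_of_mul_transpose_eq_conjDiagonal_of_le_sq (hQ : Q * Qᵀ = 1)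
    (hQc : ∀ k l, Q k l ^ 2 ≤ c) {d s : ι → ℝ} (hs : ∀ l, 0 < s l)
    (hds : ∀ l, d l ≤ s l ^ 2) {A : Matrix ι ι ℝ} (hA : A * Aᵀ = conjDiagonal Q d) :
    ∑ k, A k k ^ 2 ≤ c * (∑ l, s l) ^ 2 := by
  have hQ' : Qᵀ * Q = 1 := mul_eq_one_comm.mp hQ
  set r : ι → ℝ := fun l => √(s l)
  have hr : ∀ l, 0 < r l := fun l => Real.sqrt_pos.mpr (hs l)
  have hrr : r * r = s := funext fun l => Real.mul_self_sqrt (hs l).le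
  set P := conjDiagonal Q r
  set B := conjDiagonal Q r⁻¹ * A
  have hPB : P * B = A := by
    have hrinv : r * r⁻¹ = 1 := funext fun l => mul_inv_cancel₀ (hr l).ne'
    rw [← Matrix.mul_assoc, conjDiagonal_mul_conjDiagonal Q hQ', hrinv, conjDiagonal_one Q hQ,
      Matrix.one_mul]
  have hPP : ∀ k, (P * Pᵀ) k k ≤ c * ∑ l, s l := fun k => by
    rw [transpose_conjDiagonal, conjDiagonal_mul_conjDiagonal Q hQ', hrr]
    exact conjDiagonal_apply_self_le (fun l => (hs l).le) hQc k
  have hBB : trace (Bᵀ * B) ≤ ∑ l, s l := by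
    have : B * Bᵀ = conjDiagonal Q (r⁻¹ * d * r⁻¹) := by
      rw [Matrix.transpose_mul, transpose_conjDiagonal, Matrix.mul_assoc, ← Matrix.mul_assoc A,
        hA, conjDiagonal_mul_conjDiagonal Q hQ', conjDiagonal_mul_conjDiagonal Q hQ', mul_assoc]
    rw [trace_mul_comm, this, trace_conjDiagonal Q hQ']
    refine Finset.sum_le_sum fun l _ => ?_
    have hdiv : (r⁻¹ * d * r⁻¹) l = d l / s l := by
      simp only [Pi.mul_apply, Pi.inv_apply, ← congrFun hrr l]
      field_simp
    rw [hdiv, div_le_iff₀ (hs l)]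
    nlinarith [hds l]
  have hc : 0 ≤ c * ∑ l, s l := by
    rcases isEmpty_or_nonempty ι with hι | ⟨⟨k⟩⟩
    · simp
    · exact mul_nonneg ((sq_nonneg _).trans (hQc k k)) (Finset.sum_nonneg fun l _ => (hs l).le)
  calc ∑ k, A k k ^ 2 = ∑ k, (P * B) k k ^ 2 := by rw [hPB]
    _ ≤ (c * ∑ l, s l) * trace (Bᵀ * B) := sum_sq_diag_mul_le P B hPP
    _ ≤ (c * ∑ l, s l) * ∑ l, s l := mul_le_mul_of_nonneg_left hBB hc
    _ = c * (∑ l, s l) ^ 2 := by ring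

theorem sum_sq_diag_le_of_mul_transpose_eq_conjDiagonal (hQ : Q * Qᵀ = 1)
    (hQc : ∀ k l, Q k l ^ 2 ≤ c) {d : ι → ℝ} (hd : 0 ≤ d) {A : Matrix ι ι ℝ}
    (hA : A * Aᵀ = conjDiagonal Q d) :
    ∑ k, A k k ^ 2 ≤ c * (∑ l, √(d l)) ^ 2 := by
  have hε : ∀ ε > (0 : ℝ), ∑ k, A k k ^ 2 ≤ c * (∑ l, (√(d l) + ε)) ^ 2 := fun ε hε =>
    sum_sq_diag_le_of_mul_transpose_eq_conjDiagonal_of_le_sq hQ hQc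
      (fun l => add_pos_of_nonneg_of_pos (Real.sqrt_nonneg _) hε)
      (fun l => by nlinarith [Real.sq_sqrt (hd l), Real.sqrt_nonneg (d l)]) hA
  have hcont : Continuous fun ε : ℝ => c * (∑ l, (√(d l) + ε)) ^ 2 := by fun_prop
  simpa using ge_of_tendsto (hcont.continuousWithinAt (s := Set.Ioi 0) (x := 0))
    (eventually_nhdsWithin_of_forall hε)

end Incoherent

theorem PosSemidef.eigenvectorUnitary_mul_diagonal_sqrt_mul_star_eq {ι : Type*} [Fintype ι]
    [DecidableEq ι] {H S : Matrix ι ι ℝ} (hH : H.PosSemidef) (hS : S.PosSemidef)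
    (hSS : S * S = H) :
    (hH.1.eigenvectorUnitary : Matrix ι ι ℝ) * diagonal (Real.sqrt ∘ hH.1.eigenvalues) *
      (star hH.1.eigenvectorUnitary : Matrix ι ι ℝ) = S := by
  open scoped MatrixOrder in
  calc _ = hH.1.cfc Real.sqrt := by
        simp [IsHermitian.cfc, Function.comp_def, Unitary.conjStarAlgAut_apply]
    _ = cfcₙ Real.sqrt H := by
        rw [← IsHermitian.cfc_eq, cfcₙ_eq_cfc (hf := Real.continuous_sqrt.continuousOn)
          (hf0 := Real.sqrt_zero)]
    _ = CFC.sqrt H := (CFC.sqrt_eq_real_sqrt H hH.nonneg).symm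
    _ = S := CFC.sqrt_unique hSS hS.nonneg

theorem exists_mul_transpose_eq_LDL_and_trace_eq_sum_sq {ι : Type*} [Fintype ι] [DecidableEq ι]
    {U D : Matrix ι ι ℝ} (hU : ∀ i, U i i = 0) (hD : D.IsDiag) (hD0 : ∀ i, 0 ≤ D i i) :
    ∃ A : Matrix ι ι ℝ, A * Aᵀ = (U + 1) * D * (U + 1)ᵀ ∧ trace D = ∑ k, A k k ^ 2 := by
  refine ⟨(U + 1) * diagonal fun i => √(D i i), ?_, ?_⟩
  · rw [Matrix.transpose_mul, diagonal_transpose, Matrix.mul_assoc, ← Matrix.mul_assoc (diagonal _),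
      diagonal_mul_diagonal, ← Matrix.mul_assoc]
    congr 3
    simp_rw [Real.mul_self_sqrt (hD0 _)]
    exact hD.diagonal_diag
  · simp [trace, mul_diagonal, hU, Real.sq_sqrt (hD0 _)]

end Matrix

/-- Let `H` be a `μ`-incoherent positive semidefinite symmetric
matrix with LDL decomposition `H = (Ù + I) D (Ù + I)ᵀ`, where `Ù` is strictly
upper triangular and `D` is a nonnegative diagonal matrix.  Then
`tr D ≤ (μ²/n) · tr(H^{1/2})²`. -/
theorem trace_LDL_diag_le_of_incoherent {n : ℕ} (μc : ℝ)
    (H Ugrave D : Matrix (Fin n) (Fin n) ℝ)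
    (hH : H.PosSemidef) (hinc : IncoherentH H μc)
    (hUgrave : ∀ i j : Fin n, j ≤ i → Ugrave i j = 0)
    (hDdiag : ∀ i j, i ≠ j → D i j = 0) (hDnonneg : ∀ i, 0 ≤ D i i)
    (hLDL : H = (Ugrave + 1) * D * (Ugrave + 1)ᵀ) :
    Matrix.trace D ≤ μc ^ 2 / n * (Matrix.trace ((hH.1.eigenvectorUnitary : Matrix (Fin n) (Fin n) ℝ) *
      diagonal (Real.sqrt ∘ hH.1.eigenvalues) *
      (star hH.1.eigenvectorUnitary : Matrix (Fin n) (Fin n) ℝ))) ^ 2 := by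
  obtain ⟨Q, Λ, hQ, hΛ, hHΛ, hQμ⟩ := hinc
  have hQ' : Qᵀ * Q = 1 := mul_eq_one_comm.mp hQ
  have hQc : ∀ k l, Q k l ^ 2 ≤ μc ^ 2 / n := fun k l => by
    simpa [div_pow] using pow_le_pow_left₀ (abs_nonneg _) (hQμ k l) 2
  have hHd : H = conjDiagonal Q (diag Λ) := by rw [hHΛ, conjDiagonal, IsDiag.diagonal_diag hΛ]
  have hd : 0 ≤ diag Λ := nonneg_of_posSemidef_conjDiagonal hQ' (hHd ▸ hH)
  have hsqrt : (hH.1.eigenvectorUnitary : Matrix (Fin n) (Fin n) ℝ) *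
      diagonal (Real.sqrt ∘ hH.1.eigenvalues) *
      (star hH.1.eigenvectorUnitary : Matrix (Fin n) (Fin n) ℝ) =
      conjDiagonal Q fun l => √(diag Λ l) := by
    refine hH.eigenvectorUnitary_mul_diagonal_sqrt_mul_star_eq
      (posSemidef_conjDiagonal fun l => Real.sqrt_nonneg _) ?_
    rw [conjDiagonal_mul_conjDiagonal Q hQ', hHd]
    exact congrArg _ (funext fun l => Real.mul_self_sqrt (hd l))
  obtain ⟨A, hA, htrace⟩ := exists_mul_transpose_eq_LDL_and_trace_eq_sum_sq
    (fun i => hUgrave i i le_rfl) hDdiag hDnonneg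
  rw [hsqrt, trace_conjDiagonal Q hQ', htrace]
  exact sum_sq_diag_le_of_mul_transpose_eq_conjDiagonal hQ hQc hd
    (hA.trans (hLDL.symm.trans hHd))
end

section
/- Let H ∈ ℝ^{n×n} be symmetric positive definite and let α > 0 satisfy α ≥ e_k^T H^{1/2} e_k for all k = 1, …, n. Define Σ_0 = 0 and, for k = 1, …, n, Σ_k = (I − α^{-1} e_k e_k^T H^{1/2}) Σ_{k−1} (I − α^{-1} H^{1/2} e_k e_k^T) + e_k e_k^T. Then Σ_n ⪯ α H^{−1/2}, and consequently tr(H Σ_n) ≤ α · tr(H^{1/2}). -/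
/-!
Write `Q = H^{1/2}`, `E_k = e_k e_kᵀ`, `A_k = I − α⁻¹ E_k Q` and `D_k = α Q⁻¹ − Σ_k`. Since
`A_k (α Q⁻¹) A_kᵀ = α Q⁻¹ − 2 E_k + α⁻¹ Q_kk E_k`, the recurrence becomes
`D_k = A_k D_{k−1} A_kᵀ + (1 − α⁻¹ Q_kk) E_k`: a congruence of `D_{k−1}` plus a nonnegative
multiple of `E_k`. Hence `D_n ⪰ 0` by induction from `D_0 = α Q⁻¹ ⪰ 0`, and pairing with
`H = Q²` gives `0 ≤ tr(H D_n) = α tr Q − tr(H Σ_n)`.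
-/

open Matrix

section OldSqrt

open scoped ComplexOrder

/-- The old Mathlib `Matrix.PosSemidef.sqrt` (removed upstream), with its original definition. -/
noncomputable def Matrix.PosSemidef.sqrt {n 𝕜 : Type*} [Fintype n] [DecidableEq n] [RCLike 𝕜]
    {A : Matrix n n 𝕜} (hA : A.PosSemidef) : Matrix n n 𝕜 :=
  hA.isHermitian.eigenvectorUnitary.1 * diagonal ((↑) ∘ (√·) ∘ hA.isHermitian.eigenvalues) *
    (star hA.isHermitian.eigenvectorUnitary : Matrix n n 𝕜)

end OldSqrt

open scoped ComplexOrder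

lemma Matrix.posSemidef_single_one {ι 𝕜 : Type*} [DecidableEq ι] [RCLike 𝕜] (k : ι) :
    (single k k (1 : 𝕜)).PosSemidef :=
  diagonal_single k (1 : 𝕜) ▸ PosSemidef.diagonal (Pi.single_nonneg.mpr zero_le_one)

variable {ι 𝕜 : Type*} [Fintype ι] [DecidableEq ι]

namespace Matrix.PosSemidef

variable [RCLike 𝕜] {A : Matrix ι ι 𝕜}

lemma posSemidef_sqrt (hA : A.PosSemidef) : hA.sqrt.PosSemidef :=
  (PosSemidef.diagonal fun i => by simp).mul_mul_conjTranspose_same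
    hA.isHermitian.eigenvectorUnitary.1

lemma sqrt_mul_self (hA : A.PosSemidef) : hA.sqrt * hA.sqrt = A := by
  conv_rhs => rw [hA.isHermitian.spectral_theorem, Unitary.conjStarAlgAut_apply]
  have hU := Unitary.star_mul_self_of_mem hA.isHermitian.eigenvectorUnitary.2
  simp only [sqrt, mul_assoc]
  rw [← mul_assoc (star _), hU, one_mul, ← mul_assoc (diagonal _), diagonal_mul_diagonal]
  congr 3
  funext i
  simp [← RCLike.ofReal_mul, Real.mul_self_sqrt (hA.eigenvalues_nonneg i)]

lemma trace_mul_nonneg {B : Matrix ι ι 𝕜} (hA : A.PosSemidef) (hB : B.PosSemidef) :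
    0 ≤ (A * B).trace := by
  have hA' : A = hA.sqrtᴴ * hA.sqrt := by rw [hA.posSemidef_sqrt.isHermitian.eq, sqrt_mul_self]
  rw [hA', mul_assoc, trace_mul_comm]
  exact (hB.mul_mul_conjTranspose_same _).trace_nonneg

end Matrix.PosSemidef

lemma Matrix.PosDef.isUnit_det_sqrt [RCLike 𝕜] {A : Matrix ι ι 𝕜} (hA : A.PosDef) :
    IsUnit hA.posSemidef.sqrt.det := by
  rw [← isUnit_iff_isUnit_det]
  exact isUnit_of_mul_isUnit_left (hA.posSemidef.sqrt_mul_self ▸ hA.isUnit)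

def sigmaStep [Field 𝕜] (α : 𝕜) (Q : Matrix ι ι 𝕜) (k : ι) (S : Matrix ι ι 𝕜) : Matrix ι ι 𝕜 :=
  (1 - α⁻¹ • (single k k 1 * Q)) * S * (1 - α⁻¹ • (Q * single k k 1)) + single k k 1

theorem smul_inv_sub_sigmaStep [Field 𝕜] {α : 𝕜} (hα : α ≠ 0) {Q : Matrix ι ι 𝕜}
    (hQ : IsUnit Q.det) (k : ι) (S : Matrix ι ι 𝕜) :
    α • Q⁻¹ - sigmaStep α Q k S =
      (1 - α⁻¹ • (single k k 1 * Q)) * (α • Q⁻¹ - S) * (1 - α⁻¹ • (Q * single k k 1)) +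
        (1 - α⁻¹ * Q k k) • single k k 1 := by
  have hEQE : single k k 1 * (Q * single k k 1) = Q k k • single k k (1 : 𝕜) := by
    rw [← mul_assoc, single_mul_mul_single, smul_single, mul_one, one_mul, smul_eq_mul, mul_one]
  simp only [sigmaStep, sub_mul, mul_sub, one_mul, mul_one, smul_mul_assoc, mul_smul_comm,
    mul_assoc, nonsing_inv_mul_cancel_left _ _ hQ, mul_nonsing_inv _ hQ, hEQE, smul_smul]
  match_scalars <;> field_simp
  ring

theorem posSemidef_smul_inv_sub_sigmaStep {α : ℝ} (hα : 0 < α) {Q : Matrix ι ι ℝ}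
    (hQ : Q.IsHermitian) (hQdet : IsUnit Q.det) {k : ι} (hk : Q k k ≤ α) {S : Matrix ι ι ℝ}
    (hS : (α • Q⁻¹ - S).PosSemidef) : (α • Q⁻¹ - sigmaStep α Q k S).PosSemidef := by
  have hadj : (1 - α⁻¹ • (single k k 1 * Q))ᴴ = 1 - α⁻¹ • (Q * single k k 1) := by
    rw [conjTranspose_sub, conjTranspose_one, conjTranspose_smul, conjTranspose_mul, hQ.eq,
      (posSemidef_single_one k).isHermitian.eq, star_trivial]
  have hc : 0 ≤ 1 - α⁻¹ * Q k k := by rwa [sub_nonneg, inv_mul_le_iff₀ hα, mul_one]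
  rw [smul_inv_sub_sigmaStep hα.ne' hQdet, ← hadj]
  exact (hS.mul_mul_conjTranspose_same _).add ((posSemidef_single_one k).smul hc)

/-- Let `H` be symmetric positive definite, and let `α > 0`
satisfy `α ≥ e_kᵀ H^{1/2} e_k` for all `k`.  Define `Σ_0 = 0` and
`Σ_k = (I − α⁻¹ e_k e_kᵀ H^{1/2}) Σ_{k−1} (I − α⁻¹ H^{1/2} e_k e_kᵀ) + e_k e_kᵀ`.
Then `Σ_n ⪯ α H^{−1/2}` (Loewner order), and consequently
`tr(H Σ_n) ≤ α · tr(H^{1/2})`. -/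
theorem sigma_recurrence_loewner_bound {n : ℕ} (α : ℝ)
    (H : Matrix (Fin n) (Fin n) ℝ) (hH : H.PosDef)
    (hα : 0 < α) (hαdiag : ∀ k : Fin n, hH.posSemidef.sqrt k k ≤ α)
    (S : ℕ → Matrix (Fin n) (Fin n) ℝ)
    (hS0 : S 0 = 0)
    (hSrec : ∀ k : Fin n,
      S (k + 1) =
        (1 - α⁻¹ • (Matrix.single k k 1 * hH.posSemidef.sqrt)) * S k *
            (1 - α⁻¹ • (hH.posSemidef.sqrt * Matrix.single k k 1)) +
          Matrix.single k k 1) :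
    (α • (hH.posSemidef.sqrt)⁻¹ - S n).PosSemidef ∧
    Matrix.trace (H * S n) ≤ α * Matrix.trace hH.posSemidef.sqrt := by
  set Q := hH.posSemidef.sqrt
  have hQ : Q.PosSemidef := hH.posSemidef.posSemidef_sqrt
  have hQdet : IsUnit Q.det := hH.isUnit_det_sqrt
  have hloewner : ∀ k ≤ n, (α • Q⁻¹ - S k).PosSemidef := by
    intro k
    induction k with
    | zero => intro _; simpa [hS0] using hQ.inv.smul hα.le
    | succ k ih =>
      intro hk
      rw [show S (k + 1) = sigmaStep α Q ⟨k, hk⟩ (S k) from hSrec ⟨k, hk⟩]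
      exact posSemidef_smul_inv_sub_sigmaStep hα hQ.isHermitian hQdet (hαdiag _)
        (ih (k.le_succ.trans hk))
  have hHQ : H * Q⁻¹ = Q := by
    rw [← hH.posSemidef.sqrt_mul_self, mul_assoc, mul_nonsing_inv _ hQdet, mul_one]
  have htrace := hH.posSemidef.trace_mul_nonneg (hloewner n le_rfl)
  rw [mul_sub, Matrix.mul_smul, hHQ, trace_sub, trace_smul, smul_eq_mul, sub_nonneg] at htrace
  exact ⟨hloewner n le_rfl, htrace⟩
end

section
/- Let H ∈ ℝ^{n×n} be symmetric positive definite with LDL decomposition H = Ũ D Ũ^T, where Ũ is unit upper triangular and D is positive diagonal. Fix t ∈ {1, …, n} and Δ_{1:(t−1)} ∈ ℝ^{m×(t−1)}, and consider minimizing tr(Δ H Δ^T) over Δ_{t:n} ∈ ℝ^{m×(n−t+1)}, where Δ = [Δ_{1:(t−1)}, Δ_{t:n}]. The unique minimizer is Δ_{t:n} = −Δ_{1:(t−1)} H_{1:(t−1),t:n} (H_{t:n,t:n})^{−1} = −Δ_{1:(t−1)} Ũ_{1:(t−1),t:n} (Ũ_{t:n,t:n})^{−1}, and its first column (the t-th column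 of Δ) equals −Δ_{1:(t−1)} Ũ_{1:(t−1),t}. Consequently, the OPTQ update, which quantizes the t-th column after exactly minimizing the proxy loss over the remaining columns, coincides with the LDLQ update ŵ_t = Q(w_t − (Ŵ − W)(Ũ − I)e_t). -/
/-!
Split the columns into `Lo t ⊕ Hi t`, so that `Δ = [F, X]` and `H = [A B; Bᵀ C]` with `C`
positive definite. At `X₀ = -F B C⁻¹` the normal equation `F B + X₀ C = 0` holds, which kills the
cross terms: `tr (Δ H Δᵀ)` at `X₀ + Y` exceeds its value at `X₀` by `tr (Y C Yᵀ) > 0`.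
Reading `H = Ũ D Ũᵀ` blockwise gives `B = Ũ₁₂ D₂ Ũ₂₂ᵀ` and `C = Ũ₂₂ D₂ Ũ₂₂ᵀ`, so
`B C⁻¹ = Ũ₁₂ Ũ₂₂⁻¹`. The first column of the unit upper triangular `Ũ₂₂` is `e₁`, hence so is
that of `Ũ₂₂⁻¹`, and the first column of the minimizer is `-F Ũ_{1:(t−1),t}`: the LDLQ feedback.
-/

open Matrix

namespace OPTQEquiv

variable {m n : ℕ}

/-- Column indices strictly before `t`. -/
abbrev Lo (t : Fin n) := {j : Fin n // j < t}

/-- Column indices `t` and after. -/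
abbrev Hi (t : Fin n) := {j : Fin n // t ≤ j}

/-- The matrix `Δ = [Δ_{1:(t−1)}, Δ_{t:n}]` assembled from the fixed block `F`
(columns before `t`) and the free block `X` (columns `t` onwards). -/
def emb (t : Fin n) (F : Matrix (Fin m) (Lo t) ℝ) (X : Matrix (Fin m) (Hi t) ℝ) :
    Matrix (Fin m) (Fin n) ℝ :=
  Matrix.of fun i j => if h : j < t then F i ⟨j, h⟩ else X i ⟨j, not_lt.mp h⟩

/-- The submatrix `M_{1:(t−1),t:n}`. -/
def subLoHi (t : Fin n) (M : Matrix (Fin n) (Fin n) ℝ) : Matrix (Lo t) (Hi t) ℝ :=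
  M.submatrix Subtype.val Subtype.val

/-- The submatrix `M_{t:n,t:n}`. -/
def subHiHi (t : Fin n) (M : Matrix (Fin n) (Fin n) ℝ) : Matrix (Hi t) (Hi t) ℝ :=
  M.submatrix Subtype.val Subtype.val

/-- The claimed minimizer `Δ_{t:n} = −Δ_{1:(t−1)} H_{1:(t−1),t:n} (H_{t:n,t:n})⁻¹`. -/
noncomputable def optqMin (t : Fin n) (H : Matrix (Fin n) (Fin n) ℝ)
    (F : Matrix (Fin m) (Lo t) ℝ) : Matrix (Fin m) (Hi t) ℝ :=
  -(F * subLoHi t H * (subHiHi t H)⁻¹)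

end OPTQEquiv

namespace Matrix

variable {ι κ ν R : Type*} [Fintype κ] [Fintype ν]

section Quadratic

theorem add_mul_mul_transpose_add_of_mul_mul_transpose_eq_zero [CommRing R]
    {M : Matrix κ κ R} (hM : Mᵀ = M) {P E : Matrix ι κ R} (h : P * M * Eᵀ = 0) :
    (P + E) * M * (P + E)ᵀ = P * M * Pᵀ + E * M * Eᵀ := by
  have h' : E * M * Pᵀ = 0 := by
    simpa [transpose_mul, hM, Matrix.mul_assoc] using congrArg transpose h
  simp only [transpose_add, Matrix.add_mul, Matrix.mul_add, h, h']
  abel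

theorem fromCols_add_mul_mul_transpose [CommRing R] {M : Matrix (κ ⊕ ν) (κ ⊕ ν) R}
    (hM : Mᵀ = M) (F : Matrix ι κ R) {X₀ : Matrix ι ν R}
    (hX₀ : F * M.toBlocks₁₂ + X₀ * M.toBlocks₂₂ = 0) (Y : Matrix ι ν R) :
    fromCols F (X₀ + Y) * M * (fromCols F (X₀ + Y))ᵀ =
      fromCols F X₀ * M * (fromCols F X₀)ᵀ + Y * M.toBlocks₂₂ * Yᵀ := by
  have hsplit : fromCols F (X₀ + Y) = fromCols F X₀ + fromCols 0 Y := by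
    ext i (j | j) <;> simp
  rw [hsplit, add_mul_mul_transpose_add_of_mul_mul_transpose_eq_zero hM]
  all_goals
    rw [← fromBlocks_toBlocks M]
    simp [transpose_fromCols, fromCols_mul_fromBlocks, fromCols_mul_fromRows, hX₀,
      Matrix.mul_assoc]

theorem PosDef.trace_mul_mul_transpose_pos [Fintype ι] {C : Matrix ν ν ℝ} (hC : C.PosDef)
    {Y : Matrix ι ν ℝ} (hY : Y ≠ 0) : 0 < (Y * C * Yᵀ).trace := by
  obtain ⟨i₀, hi₀⟩ : ∃ i, Y i ≠ 0 := by
    by_contra! h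
    exact hY (funext h)
  have hdiag : ∀ i, (Y * C * Yᵀ) i i = Y i ⬝ᵥ C *ᵥ Y i := fun i => by
    simp only [mul_apply, transpose_apply, dotProduct, mulVec, Finset.sum_mul, Finset.mul_sum]
    rw [Finset.sum_comm]
    exact Finset.sum_congr rfl fun _ _ => Finset.sum_congr rfl fun _ _ => by ring
  refine Finset.sum_pos' (fun i _ => ?_) ⟨i₀, Finset.mem_univ _, ?_⟩
  · simpa [hdiag] using hC.posSemidef.dotProduct_mulVec_nonneg (Y i)
  · simpa [hdiag] using hC.dotProduct_mulVec_pos hi₀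

theorem trace_fromCols_mul_mul_transpose_lt [Fintype ι] [DecidableEq ν]
    {M : Matrix (κ ⊕ ν) (κ ⊕ ν) ℝ} (hM : Mᵀ = M) (hC : M.toBlocks₂₂.PosDef)
    (F : Matrix ι κ ℝ) {X : Matrix ι ν ℝ} (hX : X ≠ -(F * M.toBlocks₁₂ * M.toBlocks₂₂⁻¹)) :
    (fromCols F (-(F * M.toBlocks₁₂ * M.toBlocks₂₂⁻¹)) * M *
        (fromCols F (-(F * M.toBlocks₁₂ * M.toBlocks₂₂⁻¹)))ᵀ).trace <
      (fromCols F X * M * (fromCols F X)ᵀ).trace := by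
  set X₀ := -(F * M.toBlocks₁₂ * M.toBlocks₂₂⁻¹)
  have hnormal : F * M.toBlocks₁₂ + X₀ * M.toBlocks₂₂ = 0 := by
    rw [Matrix.neg_mul,
      nonsing_inv_mul_cancel_right _ _ ((isUnit_iff_isUnit_det _).mp hC.isUnit), add_neg_cancel]
  have hquad := fromCols_add_mul_mul_transpose hM F hnormal (X - X₀)
  rw [add_sub_cancel] at hquad
  rw [hquad, trace_add, lt_add_iff_pos_right]
  exact hC.trace_mul_mul_transpose_pos (sub_ne_zero.mpr hX)

end Quadratic

section LDL

variable [CommRing R]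

theorem fromBlocks_mul_fromBlocks_diagonal_mul_transpose (U₁₁ : Matrix κ κ R)
    (U₁₂ : Matrix κ ν R) (U₂₂ : Matrix ν ν R) (D₁ : Matrix κ κ R) (D₂ : Matrix ν ν R) :
    fromBlocks U₁₁ U₁₂ 0 U₂₂ * fromBlocks D₁ 0 0 D₂ * (fromBlocks U₁₁ U₁₂ 0 U₂₂)ᵀ =
      fromBlocks (U₁₁ * D₁ * U₁₁ᵀ + U₁₂ * D₂ * U₁₂ᵀ) (U₁₂ * D₂ * U₂₂ᵀ)
        (U₂₂ * D₂ * U₁₂ᵀ) (U₂₂ * D₂ * U₂₂ᵀ) := by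
  simp [fromBlocks_transpose, fromBlocks_multiply]

theorem mul_mul_transpose_mul_inv_mul_mul_transpose [DecidableEq ν] {U D : Matrix ν ν R}
    (h : IsUnit (U * D * Uᵀ).det) (B : Matrix ι ν R) :
    B * D * Uᵀ * (U * D * Uᵀ)⁻¹ = B * U⁻¹ := by
  have hU : IsUnit U.det := by
    rw [det_mul, det_mul] at h
    exact isUnit_of_mul_isUnit_left (isUnit_of_mul_isUnit_left h)
  have hfactor : B * D * Uᵀ = B * U⁻¹ * (U * D * Uᵀ) := by
    simp only [← Matrix.mul_assoc, nonsing_inv_mul_cancel_right _ _ hU]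
  rw [hfactor, mul_nonsing_inv_cancel_right _ _ h]

variable [DecidableEq ν]

theorem mul_apply_of_col_eq_one {M : Matrix ι ν R} {N : Matrix ν ν R} {c : ν}
    (hN : ∀ k, N k c = (1 : Matrix ν ν R) k c) (i : ι) : (M * N) i c = M i c := by
  simp only [mul_apply, hN, one_apply, mul_ite, mul_one, mul_zero, Finset.sum_ite_eq',
    Finset.mem_univ, if_true]

theorem inv_apply_of_col_eq_one {A : Matrix ν ν R} (hA : IsUnit A.det) {c : ν}
    (hc : ∀ k, A k c = (1 : Matrix ν ν R) k c) (k : ν) : A⁻¹ k c = (1 : Matrix ν ν R) k c := by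
  rw [← mul_apply_of_col_eq_one (M := A⁻¹) hc k, nonsing_inv_mul _ hA]

end LDL

end Matrix

namespace OPTQEquiv

variable {m n : ℕ}

def loHiEquiv (t : Fin n) : Lo t ⊕ Hi t ≃ Fin n :=
  (Equiv.sumCongr (Equiv.refl _) (Equiv.subtypeEquivRight fun _ => not_lt.symm)).trans
    (Equiv.sumCompl _)

section Blocks

variable {t : Fin n}

theorem submatrix_emb_loHiEquiv (F : Matrix (Fin m) (Lo t) ℝ) (X : Matrix (Fin m) (Hi t) ℝ) :
    (emb t F X).submatrix id (loHiEquiv t) = fromCols F X := by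
  ext i (j | j)
  · simp [emb, loHiEquiv, j.2]
  · simp [emb, loHiEquiv, not_lt.mpr j.2]

theorem emb_mul_mul_transpose (H : Matrix (Fin n) (Fin n) ℝ) (F : Matrix (Fin m) (Lo t) ℝ)
    (X : Matrix (Fin m) (Hi t) ℝ) :
    emb t F X * H * (emb t F X)ᵀ =
      fromCols F X * H.submatrix (loHiEquiv t) (loHiEquiv t) * (fromCols F X)ᵀ := by
  rw [← submatrix_emb_loHiEquiv, transpose_submatrix, submatrix_mul_equiv, submatrix_mul_equiv,
    submatrix_id_id]

theorem trace_emb_optqMin_lt {H : Matrix (Fin n) (Fin n) ℝ} (hH : H.PosDef)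
    (F : Matrix (Fin m) (Lo t) ℝ) {X : Matrix (Fin m) (Hi t) ℝ} (hX : X ≠ optqMin t H F) :
    (emb t F (optqMin t H F) * H * (emb t F (optqMin t H F))ᵀ).trace <
      (emb t F X * H * (emb t F X)ᵀ).trace := by
  have hsymm :
      (H.submatrix (loHiEquiv t) (loHiEquiv t))ᵀ = H.submatrix (loHiEquiv t) (loHiEquiv t) := by
    rw [transpose_submatrix, (isHermitian_iff_isSymm.mp hH.1).eq]
  rw [emb_mul_mul_transpose, emb_mul_mul_transpose]
  exact trace_fromCols_mul_mul_transpose_lt hsymm (hH.submatrix Subtype.val_injective) F hX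

end Blocks

section LDL

variable {t : Fin n} {U : Matrix (Fin n) (Fin n) ℝ}

theorem submatrix_loHiEquiv_of_upperTriangular (hU : ∀ i j : Fin n, j < i → U i j = 0) :
    U.submatrix (loHiEquiv t) (loHiEquiv t) =
      fromBlocks (U.submatrix Subtype.val Subtype.val) (subLoHi t U) 0 (subHiHi t U) := by
  ext (a | a) (b | b)
  · rfl
  · rfl
  · exact hU _ _ (b.2.trans_le a.2)
  · rfl

theorem submatrix_loHiEquiv_of_diagonal {D : Matrix (Fin n) (Fin n) ℝ}
    (hD : ∀ i j, i ≠ j → D i j = 0) :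
    D.submatrix (loHiEquiv t) (loHiEquiv t) =
      fromBlocks (D.submatrix Subtype.val Subtype.val) 0 0 (subHiHi t D) := by
  ext (a | a) (b | b)
  · rfl
  · exact hD _ _ (a.2.trans_le b.2).ne
  · exact hD _ _ (b.2.trans_le a.2).ne'
  · rfl

theorem subLoHi_mul_inv_subHiHi_of_LDL {H D : Matrix (Fin n) (Fin n) ℝ} (hH : H.PosDef)
    (hU : ∀ i j : Fin n, j < i → U i j = 0) (hD : ∀ i j, i ≠ j → D i j = 0)
    (hLDL : H = U * D * Uᵀ) :
    subLoHi t H * (subHiHi t H)⁻¹ = subLoHi t U * (subHiHi t U)⁻¹ := by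
  have hblocks := congrArg (fun M => M.submatrix (loHiEquiv t) (loHiEquiv t)) hLDL
  simp only [← submatrix_mul_equiv _ _ _ (loHiEquiv t), ← transpose_submatrix,
    submatrix_loHiEquiv_of_upperTriangular hU, submatrix_loHiEquiv_of_diagonal hD,
    fromBlocks_mul_fromBlocks_diagonal_mul_transpose] at hblocks
  have h₁₂ : subLoHi t H = subLoHi t U * subHiHi t D * (subHiHi t U)ᵀ :=
    congrArg toBlocks₁₂ hblocks
  have h₂₂ : subHiHi t H = subHiHi t U * subHiHi t D * (subHiHi t U)ᵀ :=
    congrArg toBlocks₂₂ hblocks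
  have hdet : IsUnit (subHiHi t H).det :=
    (isUnit_iff_isUnit_det _).mp (hH.submatrix Subtype.val_injective).isUnit
  rw [h₂₂] at hdet
  rw [h₁₂, h₂₂, mul_mul_transpose_mul_inv_mul_mul_transpose hdet]

theorem subHiHi_apply_col_self_of_unitriangular (hU : ∀ i j : Fin n, j < i → U i j = 0)
    (hdiag : ∀ i, U i i = 1) (k : Hi t) :
    subHiHi t U k ⟨t, le_rfl⟩ = (1 : Matrix (Hi t) (Hi t) ℝ) k ⟨t, le_rfl⟩ := by
  rcases eq_or_ne k ⟨t, le_rfl⟩ with rfl | hk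
  · simp [subHiHi, hdiag]
  · rw [one_apply_ne hk]
    exact hU _ _ (lt_of_le_of_ne k.2 fun h => hk (Subtype.ext h.symm))

theorem det_subHiHi_of_unitriangular (hU : ∀ i j : Fin n, j < i → U i j = 0)
    (hdiag : ∀ i, U i i = 1) : (subHiHi t U).det = 1 := by
  rw [det_of_isUpperTriangular (M := subHiHi t U) fun i j hij => hU i j hij]
  simp [subHiHi, hdiag]

theorem mul_subLoHi_mul_inv_subHiHi_apply_self (hU : ∀ i j : Fin n, j < i → U i j = 0)
    (hdiag : ∀ i, U i i = 1) (F : Matrix (Fin m) (Lo t) ℝ) (i : Fin m) :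
    (F * subLoHi t U * (subHiHi t U)⁻¹) i ⟨t, le_rfl⟩ = ∑ j : Lo t, F i j * U j t := by
  have hunit : IsUnit (subHiHi t U).det := by
    rw [det_subHiHi_of_unitriangular hU hdiag]; exact isUnit_one
  rw [mul_apply_of_col_eq_one (inv_apply_of_col_eq_one hunit
    (subHiHi_apply_col_self_of_unitriangular hU hdiag)), mul_apply]
  rfl

theorem sum_mul_sub_one_apply_of_unitriangular (hU : ∀ i j : Fin n, j < i → U i j = 0)
    (hdiag : ∀ i, U i i = 1) (g : Fin n → ℝ) (t : Fin n) :
    ∑ j, g j * (U - 1) j t = ∑ j : Lo t, g j * U j t := by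
  have hcol : ∀ j : {j // ¬ j < t}, g j * (U - 1) j t = 0 := fun j => by
    rcases (not_lt.mp j.2).eq_or_lt with h | h
    · simp [← h, hdiag]
    · simp [hU _ _ h, one_apply_ne h.ne']
  rw [← Fintype.sum_subtype_add_sum_subtype (· < t), Fintype.sum_eq_zero _ hcol, add_zero]
  exact Finset.sum_congr rfl fun j _ => by simp [one_apply_ne j.2.ne]

end LDL

theorem optq_step_eq_ldlq_step_general
    (H Utilde D : Matrix (Fin n) (Fin n) ℝ)
    (hH : H.PosDef)
    (hUtri : ∀ i j : Fin n, j < i → Utilde i j = 0)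
    (hUdiag : ∀ i, Utilde i i = 1)
    (hDdiag : ∀ i j, i ≠ j → D i j = 0)
    (hLDL : H = Utilde * D * Utildeᵀ)
    (t : Fin n) (F : Matrix (Fin m) (Lo t) ℝ) :
    (∀ X : Matrix (Fin m) (Hi t) ℝ, X ≠ optqMin t H F →
      Matrix.trace (emb t F (optqMin t H F) * H * (emb t F (optqMin t H F))ᵀ) <
        Matrix.trace (emb t F X * H * (emb t F X)ᵀ)) ∧
    optqMin t H F = -(F * subLoHi t Utilde * (subHiHi t Utilde)⁻¹) ∧
    (∀ i : Fin m,
      optqMin t H F i ⟨t, le_refl t⟩ = -∑ j : Lo t, F i j * Utilde j t) ∧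
    (∀ (Q : ℝ → ℝ) (W What : Matrix (Fin m) (Fin n) ℝ),
      (∀ (i : Fin m) (j : Lo t), What i j.1 - W i j.1 = F i j) →
      ∀ i : Fin m,
        Q (W i t + optqMin t H F i ⟨t, le_refl t⟩) =
          Q (W i t - ∑ j : Fin n, (What i j - W i j) * ((Utilde - 1) j t))) := by
  have hmin : optqMin t H F = -(F * subLoHi t Utilde * (subHiHi t Utilde)⁻¹) := by
    rw [optqMin, Matrix.mul_assoc, subLoHi_mul_inv_subHiHi_of_LDL hH hUtri hDdiag hLDL,
      ← Matrix.mul_assoc]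
  have hcol : ∀ i, optqMin t H F i ⟨t, le_refl t⟩ = -∑ j : Lo t, F i j * Utilde j t := by
    intro i
    rw [hmin, neg_apply, mul_subLoHi_mul_inv_subHiHi_apply_self hUtri hUdiag]
  refine ⟨fun X hX => trace_emb_optqMin_lt hH F hX, hmin, hcol, fun Q W What hF i => ?_⟩
  rw [hcol, sum_mul_sub_one_apply_of_unitriangular hUtri hUdiag]
  simp only [hF, sub_eq_add_neg]

/-- Let `H` be symmetric positive definite with LDL
decomposition `H = Ũ D Ũᵀ` (`Ũ` unit upper triangular, `D` positive diagonal).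
Fix `t` and `Δ_{1:(t−1)} = F`, and minimize `tr(Δ H Δᵀ)` over the remaining
columns `Δ_{t:n}`.  The unique minimizer is
`−F H_{1:(t−1),t:n} (H_{t:n,t:n})⁻¹ = −F Ũ_{1:(t−1),t:n} (Ũ_{t:n,t:n})⁻¹`, and
its first column (the `t`-th column of `Δ`) is `−F Ũ_{1:(t−1),t}`.  Consequently
the OPTQ update, which quantizes the `t`-th column after exactly minimizing the
proxy loss over the remaining columns, coincides with the LDLQ update
`ŵ_t = Q(w_t − (Ŵ − W)(Ũ − I) e_t)`. -/
theorem optq_step_eq_ldlq_step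
    (H Utilde D : Matrix (Fin n) (Fin n) ℝ)
    (hH : H.PosDef)
    (hUtri : ∀ i j : Fin n, j < i → Utilde i j = 0)
    (hUdiag : ∀ i, Utilde i i = 1)
    (hDdiag : ∀ i j, i ≠ j → D i j = 0) (hDpos : ∀ i, 0 < D i i)
    (hLDL : H = Utilde * D * Utildeᵀ)
    (t : Fin n) (F : Matrix (Fin m) (Lo t) ℝ) :
    (∀ X : Matrix (Fin m) (Hi t) ℝ, X ≠ optqMin t H F →
      Matrix.trace (emb t F (optqMin t H F) * H * (emb t F (optqMin t H F))ᵀ) <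
        Matrix.trace (emb t F X * H * (emb t F X)ᵀ)) ∧
    optqMin t H F = -(F * subLoHi t Utilde * (subHiHi t Utilde)⁻¹) ∧
    (∀ i : Fin m,
      optqMin t H F i ⟨t, le_refl t⟩ = -∑ j : Lo t, F i j * Utilde j t) ∧
    (∀ (Q : ℝ → ℝ) (W What : Matrix (Fin m) (Fin n) ℝ),
      (∀ (i : Fin m) (j : Lo t), What i j.1 - W i j.1 = F i j) →
      ∀ i : Fin m,
        Q (W i t + optqMin t H F i ⟨t, le_refl t⟩) =
          Q (W i t - ∑ j : Fin n, (What i j - W i j) * ((Utilde - 1) j t))) :=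
  optq_step_eq_ldlq_step_general H Utilde D hH hUtri hUdiag hDdiag hLDL t F

end OPTQEquiv
end
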